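/- Let r, s: I → ℝ be continuous on an open interval I containing 0, and let f₁, f₂: I → ℝ be the solutions of u'' + r u' + s u = 0 with f₁(0) = f₂'(0) = 1 and f₁'(0) = f₂(0) = 0. Let J ⊆ I be an open subinterval containing 0 on which f₁ does not vanish, and set x̃ = f₂/f₁ on J. Then: (1) the Wronskian W = f₂' f₁ − f₂ f₁' never vanishes on I, and x̃' = W/f₁² never vanishes on J, so x̃ is a C¹ diffeomorphism of J onto an open interval; (2) for all a,b ∈ ℝ, the solution y = a f₁ + b f₂ satisfies y/f₁ = a + b·x̃ on J; (3) a twice differentiable function u: J → ℝ satisfies u'' + r u' + s u = 0 on J if and only if the function ũ := (u/f₁) ∘ x̃⁻¹ has vanishing second derivative on x̃(J). -/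

import Mathlib

/-!
The Wronskian `W = f₁ f₂' - f₁' f₂` satisfies Abel's equation `W' = -r W`, so
`W = exp (-∫₀ r) > 0`. Hence `x̃' = W / f₁²` is positive and `x̃` is a C¹ diffeomorphism of `J` onto
an open interval. For any `u`, the derivative of `u / f₁` with respect to `x̃` is the quotient of
Wronskians `W(f₁, u) / W(f₁, f₂)`, whose derivative with respect to `x̃` is
`f₁³ (u'' + r u' + s u) / W²`; this vanishes exactly when `u` solves the equation.
-/

open Set Filter Topology Function

theorem contDiffOn_one_of_isOpen {f : ℝ → ℝ} {s : Set ℝ} (hs : IsOpen s)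
    (hf : DifferentiableOn ℝ f s) (hf' : ContinuousOn (deriv f) s) : ContDiffOn ℝ 1 f s := by
  rw [show (1 : WithTop ℕ∞) = 0 + 1 from rfl, contDiffOn_succ_iff_deriv_of_isOpen hs]
  exact ⟨hf, by simp, contDiffOn_zero.2 hf'⟩

theorem contDiffOn_one_of_differentiableAt_deriv {f : ℝ → ℝ} {s : Set ℝ} (hs : IsOpen s)
    (hf : ∀ t ∈ s, DifferentiableAt ℝ f t ∧ DifferentiableAt ℝ (deriv f) t) :
    ContDiffOn ℝ 1 f s :=
  contDiffOn_one_of_isOpen hs (fun t ht => (hf t ht).1.differentiableWithinAt)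
    fun t ht => (hf t ht).2.continuousAt.continuousWithinAt

theorem eq_mul_exp_neg_integral_of_hasDerivAt {I : Set ℝ} {r w : ℝ → ℝ} {a t : ℝ}
    (hIopen : IsOpen I) (hIconn : IsPreconnected I) (hr : ContinuousOn r I)
    (hw : ∀ t ∈ I, HasDerivAt w (-r t * w t) t) (ha : a ∈ I) (ht : t ∈ I) :
    w t = w a * Real.exp (-∫ x in a..t, r x) := by
  have hR : ∀ t ∈ I, HasDerivAt (fun t => ∫ x in a..t, r x) (r t) t := fun t ht =>
    intervalIntegral.integral_hasDerivAt_right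
      (hr.mono (hIconn.ordConnected.uIcc_subset ha ht)).intervalIntegrable
      (hr.stronglyMeasurableAtFilter hIopen t ht) (hr.continuousAt (hIopen.mem_nhds ht))
  have hF : ∀ t ∈ I, HasDerivAt (fun t => w t * Real.exp (∫ x in a..t, r x)) 0 t := by
    intro t ht
    exact ((hw t ht).mul (hR t ht).exp).congr_deriv (by ring)
  have hconst := hIopen.is_const_of_deriv_eq_zero hIconn
    (fun t ht => (hF t ht).differentiableAt.differentiableWithinAt)
    (fun t ht => (hF t ht).deriv) ht ha
  simp only [intervalIntegral.integral_same, Real.exp_zero, mul_one] at hconst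
  rw [← hconst, Real.exp_neg, mul_inv_cancel_right₀ (Real.exp_pos _).ne']

section LeftInverse

variable {x g : ℝ → ℝ} {J : Set ℝ}

theorem image_mem_nhds_of_contDiffOn (hJ : IsOpen J) (hx : ContDiffOn ℝ 1 x J)
    (hx' : ∀ t ∈ J, deriv x t ≠ 0) {t : ℝ} (ht : t ∈ J) : x '' J ∈ 𝓝 (x t) := by
  rw [← ((hx.contDiffAt (hJ.mem_nhds ht)).hasStrictDerivAt one_ne_zero).map_nhds_eq (hx' t ht)]
  exact image_mem_map (hJ.mem_nhds ht)

theorem isOpen_image_of_contDiffOn (hJ : IsOpen J) (hx : ContDiffOn ℝ 1 x J)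
    (hx' : ∀ t ∈ J, deriv x t ≠ 0) : IsOpen (x '' J) :=
  isOpen_iff_mem_nhds.2 <| by
    rintro _ ⟨t, ht, rfl⟩
    exact image_mem_nhds_of_contDiffOn hJ hx hx' ht

theorem continuousAt_of_leftInvOn (hJ : IsOpen J) (hx : ContDiffOn ℝ 1 x J)
    (hx' : ∀ t ∈ J, deriv x t ≠ 0) (hg : ∀ t ∈ J, g (x t) = t) {t : ℝ} (ht : t ∈ J) :
    ContinuousAt g (x t) := by
  rw [ContinuousAt, hg t ht, ← ((hx.contDiffAt (hJ.mem_nhds ht)).hasStrictDerivAt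
    one_ne_zero).map_nhds_eq (hx' t ht), tendsto_map'_iff]
  refine tendsto_id.congr' ?_
  filter_upwards [hJ.mem_nhds ht] with s hs using (hg s hs).symm

theorem hasDerivAt_of_leftInvOn (hJ : IsOpen J) (hx : ContDiffOn ℝ 1 x J)
    (hx' : ∀ t ∈ J, deriv x t ≠ 0) (hg : ∀ t ∈ J, g (x t) = t) {t : ℝ} (ht : t ∈ J) :
    HasDerivAt g (deriv x t)⁻¹ (x t) := by
  have hxt : HasDerivAt x (deriv x t) (g (x t)) := by
    rw [hg t ht]
    exact (hx.differentiableOn one_ne_zero t ht).differentiableAt (hJ.mem_nhds ht) |>.hasDerivAt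
  refine hxt.of_local_left_inverse (continuousAt_of_leftInvOn hJ hx hx' hg ht) (hx' t ht) ?_
  filter_upwards [image_mem_nhds_of_contDiffOn hJ hx hx' ht]
  rintro _ ⟨s, hs, rfl⟩
  rw [hg s hs]

theorem contDiffOn_of_leftInvOn (hJ : IsOpen J) (hx : ContDiffOn ℝ 1 x J)
    (hx' : ∀ t ∈ J, deriv x t ≠ 0) (hg : ∀ t ∈ J, g (x t) = t) : ContDiffOn ℝ 1 g (x '' J) := by
  have hderiv : ∀ z ∈ x '' J, HasDerivAt g (deriv x (g z))⁻¹ z := by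
    rintro _ ⟨t, ht, rfl⟩
    rw [hg t ht]
    exact hasDerivAt_of_leftInvOn hJ hx hx' hg ht
  have hmaps : MapsTo g (x '' J) J := by
    rintro _ ⟨t, ht, rfl⟩
    rwa [hg t ht]
  have hgc : ContinuousOn g (x '' J) := by
    rintro _ ⟨t, ht, rfl⟩
    exact (continuousAt_of_leftInvOn hJ hx hx' hg ht).continuousWithinAt
  refine contDiffOn_one_of_isOpen (isOpen_image_of_contDiffOn hJ hx hx')
    (fun z hz => (hderiv z hz).differentiableAt.differentiableWithinAt) ?_
  refine ContinuousOn.congr ?_ fun z hz => (hderiv z hz).deriv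
  exact ((hx.continuousOn_deriv_of_isOpen hJ le_rfl).comp hgc hmaps).inv₀
    fun z hz => hx' _ (hmaps hz)

/-- If `h = dv/dx` on `J`, then `(v ∘ g)'' = (dh/dx) ∘ g` on `x '' J`. -/
theorem hasDerivAt_deriv_comp_of_leftInvOn {v h : ℝ → ℝ} {h' : ℝ} (hJ : IsOpen J)
    (hx : ContDiffOn ℝ 1 x J) (hx' : ∀ t ∈ J, deriv x t ≠ 0) (hg : ∀ t ∈ J, g (x t) = t)
    (hv : ∀ s ∈ J, HasDerivAt v (h s * deriv x s) s) {t : ℝ} (ht : t ∈ J)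
    (hh : HasDerivAt h h' t) :
    HasDerivAt (deriv fun w => v (g w)) (h' / deriv x t) (x t) := by
  have hfirst : ∀ s ∈ J, deriv (fun w => v (g w)) (x s) = h s := by
    intro s hs
    exact (HasDerivAt.comp_of_eq (x s) (hv s hs) (hasDerivAt_of_leftInvOn hJ hx hx' hg hs)
      (hg s hs).symm).deriv.trans (mul_inv_cancel_right₀ (hx' s hs) _)
  have hfirst_nhds : (deriv fun w => v (g w)) =ᶠ[𝓝 (x t)] fun w => h (g w) := by
    filter_upwards [image_mem_nhds_of_contDiffOn hJ hx hx' ht]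
    rintro _ ⟨s, hs, rfl⟩
    rw [hfirst s hs, hg s hs]
  rw [div_eq_mul_inv]
  exact (HasDerivAt.comp_of_eq (x t) hh (hasDerivAt_of_leftInvOn hJ hx hx' hg ht)
    (hg t ht).symm).congr_of_eventuallyEq hfirst_nhds

end LeftInverse

namespace LinearODE

noncomputable def wronskian (f g : ℝ → ℝ) (t : ℝ) : ℝ := deriv g t * f t - g t * deriv f t

noncomputable def residual (r s u : ℝ → ℝ) (t : ℝ) : ℝ :=
  deriv (deriv u) t + r t * deriv u t + s t * u t

variable {r s f g : ℝ → ℝ} {t : ℝ}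

theorem hasDerivAt_wronskian
    (hf : DifferentiableAt ℝ f t ∧ DifferentiableAt ℝ (deriv f) t)
    (hg : DifferentiableAt ℝ g t ∧ DifferentiableAt ℝ (deriv g) t) :
    HasDerivAt (wronskian f g) (deriv (deriv g) t * f t - g t * deriv (deriv f) t) t :=
  ((hg.2.hasDerivAt.mul hf.1.hasDerivAt).sub
    (hg.1.hasDerivAt.mul hf.2.hasDerivAt)).congr_deriv (by ring)

theorem hasDerivAt_wronskian_of_residual_eq_zero
    (hf : DifferentiableAt ℝ f t ∧ DifferentiableAt ℝ (deriv f) t)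
    (hg : DifferentiableAt ℝ g t ∧ DifferentiableAt ℝ (deriv g) t) (hfode : residual r s f t = 0) :
    HasDerivAt (wronskian f g) (f t * residual r s g t - r t * wronskian f g t) t := by
  refine (hasDerivAt_wronskian hf hg).congr_deriv ?_
  unfold residual wronskian at *
  linear_combination -g t * hfode

theorem wronskian_eq_mul_exp_neg_integral {f₁ f₂ : ℝ → ℝ} {I : Set ℝ} {a : ℝ}
    (hIopen : IsOpen I) (hIconn : IsPreconnected I) (hr : ContinuousOn r I)
    (hf₁ : ∀ t ∈ I, DifferentiableAt ℝ f₁ t ∧ DifferentiableAt ℝ (deriv f₁) t)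
    (hf₂ : ∀ t ∈ I, DifferentiableAt ℝ f₂ t ∧ DifferentiableAt ℝ (deriv f₂) t)
    (hf₁ode : ∀ t ∈ I, residual r s f₁ t = 0) (hf₂ode : ∀ t ∈ I, residual r s f₂ t = 0)
    (ha : a ∈ I) (ht : t ∈ I) :
    wronskian f₁ f₂ t = wronskian f₁ f₂ a * Real.exp (-∫ x in a..t, r x) := by
  refine eq_mul_exp_neg_integral_of_hasDerivAt hIopen hIconn hr (fun t ht => ?_) ha ht
  refine (hasDerivAt_wronskian_of_residual_eq_zero (hf₁ t ht) (hf₂ t ht)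
    (hf₁ode t ht)).congr_deriv ?_
  rw [hf₂ode t ht]
  ring

theorem hasDerivAt_wronskian_div_wronskian {f₁ f₂ u : ℝ → ℝ}
    (hf₁ : DifferentiableAt ℝ f₁ t ∧ DifferentiableAt ℝ (deriv f₁) t)
    (hf₂ : DifferentiableAt ℝ f₂ t ∧ DifferentiableAt ℝ (deriv f₂) t)
    (hu : DifferentiableAt ℝ u t ∧ DifferentiableAt ℝ (deriv u) t)
    (hf₁ode : residual r s f₁ t = 0) (hf₂ode : residual r s f₂ t = 0)
    (hW : wronskian f₁ f₂ t ≠ 0) :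
    HasDerivAt (fun t => wronskian f₁ u t / wronskian f₁ f₂ t)
      (f₁ t * residual r s u t / wronskian f₁ f₂ t) t := by
  refine ((hasDerivAt_wronskian_of_residual_eq_zero hf₁ hu hf₁ode).div
    (hasDerivAt_wronskian_of_residual_eq_zero hf₁ hf₂ hf₁ode) hW).congr_deriv ?_
  rw [hf₂ode]
  field_simp
  ring

theorem contDiffOn_div_of_differentiableAt_deriv {f₁ f₂ : ℝ → ℝ} {J : Set ℝ} (hJ : IsOpen J)
    (hf₁ : ∀ t ∈ J, DifferentiableAt ℝ f₁ t ∧ DifferentiableAt ℝ (deriv f₁) t)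
    (hf₂ : ∀ t ∈ J, DifferentiableAt ℝ f₂ t ∧ DifferentiableAt ℝ (deriv f₂) t)
    (hf₁ne : ∀ t ∈ J, f₁ t ≠ 0) : ContDiffOn ℝ 1 (fun t => f₂ t / f₁ t) J :=
  (contDiffOn_one_of_differentiableAt_deriv hJ hf₂).div
    (contDiffOn_one_of_differentiableAt_deriv hJ hf₁) hf₁ne

theorem deriv_deriv_div_comp_leftInvOn {f₁ f₂ u g : ℝ → ℝ} {J : Set ℝ} (hJ : IsOpen J)
    (hf₁ : ∀ t ∈ J, DifferentiableAt ℝ f₁ t ∧ DifferentiableAt ℝ (deriv f₁) t)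
    (hf₂ : ∀ t ∈ J, DifferentiableAt ℝ f₂ t ∧ DifferentiableAt ℝ (deriv f₂) t)
    (hu : ∀ t ∈ J, DifferentiableAt ℝ u t ∧ DifferentiableAt ℝ (deriv u) t)
    (hf₁ode : ∀ t ∈ J, residual r s f₁ t = 0) (hf₂ode : ∀ t ∈ J, residual r s f₂ t = 0)
    (hf₁ne : ∀ t ∈ J, f₁ t ≠ 0) (hW : ∀ t ∈ J, wronskian f₁ f₂ t ≠ 0)
    (hg : ∀ t ∈ J, g (f₂ t / f₁ t) = t) (ht : t ∈ J) :
    deriv (deriv fun w => u (g w) / f₁ (g w)) (f₂ t / f₁ t) =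
      f₁ t ^ 3 * residual r s u t / wronskian f₁ f₂ t ^ 2 := by
  have hx : ∀ t ∈ J, HasDerivAt (fun t => f₂ t / f₁ t) (wronskian f₁ f₂ t / f₁ t ^ 2) t :=
    fun t ht => (hf₂ t ht).1.hasDerivAt.div (hf₁ t ht).1.hasDerivAt (hf₁ne t ht)
  have hx' : ∀ t ∈ J, deriv (fun t => f₂ t / f₁ t) t ≠ 0 := fun t ht => by
    rw [(hx t ht).deriv]
    exact div_ne_zero (hW t ht) (pow_ne_zero 2 (hf₁ne t ht))
  have hv : ∀ t ∈ J, HasDerivAt (fun t => u t / f₁ t)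
      (wronskian f₁ u t / wronskian f₁ f₂ t * deriv (fun t => f₂ t / f₁ t) t) t := by
    intro t ht
    rw [(hx t ht).deriv, div_mul_div_cancel₀ (hW t ht)]
    exact (hu t ht).1.hasDerivAt.div (hf₁ t ht).1.hasDerivAt (hf₁ne t ht)
  rw [(hasDerivAt_deriv_comp_of_leftInvOn hJ
    (contDiffOn_div_of_differentiableAt_deriv hJ hf₁ hf₂ hf₁ne) hx' hg hv ht
    (hasDerivAt_wronskian_div_wronskian (hf₁ t ht) (hf₂ t ht) (hu t ht) (hf₁ode t ht)
      (hf₂ode t ht) (hW t ht))).deriv, (hx t ht).deriv]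
  field_simp [hf₁ne t ht, hW t ht]

end LinearODE

open LinearODE

theorem stmt12 (r s : ℝ → ℝ) (I J : Set ℝ)
    (hIopen : IsOpen I) (hIconn : IsPreconnected I) (hI0 : (0 : ℝ) ∈ I)
    (hr : ContinuousOn r I)
    (f₁ f₂ : ℝ → ℝ)
    (hf₁diff : ∀ t ∈ I, DifferentiableAt ℝ f₁ t ∧ DifferentiableAt ℝ (deriv f₁) t)
    (hf₂diff : ∀ t ∈ I, DifferentiableAt ℝ f₂ t ∧ DifferentiableAt ℝ (deriv f₂) t)
    (hf₁ode : ∀ t ∈ I, deriv (deriv f₁) t + r t * deriv f₁ t + s t * f₁ t = 0)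
    (hf₂ode : ∀ t ∈ I, deriv (deriv f₂) t + r t * deriv f₂ t + s t * f₂ t = 0)
    (hf₁0 : f₁ 0 = 1) (hf₁'0 : deriv f₁ 0 = 0)
    (hf₂0 : f₂ 0 = 0) (hf₂'0 : deriv f₂ 0 = 1)
    (hJopen : IsOpen J) (hJconn : IsPreconnected J)
    (hJI : J ⊆ I) (hf₁ne : ∀ t ∈ J, f₁ t ≠ 0) :
    (let xt : ℝ → ℝ := fun t => f₂ t / f₁ t
    -- (1) the Wronskian never vanishes on I, x̃' = W/f₁² ≠ 0 on J, and x̃ is a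
    --     C¹ diffeomorphism of J onto an open interval
    (∀ t ∈ I, deriv f₂ t * f₁ t - f₂ t * deriv f₁ t ≠ 0) ∧
    (∀ t ∈ J,
      deriv xt t = (deriv f₂ t * f₁ t - f₂ t * deriv f₁ t) / (f₁ t) ^ 2 ∧
      deriv xt t ≠ 0) ∧
    ContDiffOn ℝ 1 xt J ∧ InjOn xt J ∧ IsOpen (xt '' J) ∧
    IsPreconnected (xt '' J) ∧
    (∃ g : ℝ → ℝ, (∀ t ∈ J, g (xt t) = t) ∧ ContDiffOn ℝ 1 g (xt '' J)) ∧
    -- (2) the solution y = a f₁ + b f₂ satisfies y/f₁ = a + b·x̃ on J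
    (∀ a b : ℝ, ∀ t ∈ J, (a * f₁ t + b * f₂ t) / f₁ t = a + b * xt t) ∧
    -- (3) u solves the ODE on J iff ũ = (u/f₁) ∘ x̃⁻¹ has vanishing second
    --     derivative on x̃(J)
    (∀ u : ℝ → ℝ,
      (∀ t ∈ J, DifferentiableAt ℝ u t ∧ DifferentiableAt ℝ (deriv u) t) →
      ((∀ t ∈ J, deriv (deriv u) t + r t * deriv u t + s t * u t = 0) ↔
        ∀ g : ℝ → ℝ, (∀ t ∈ J, g (xt t) = t) →
          ∀ z ∈ xt '' J,
            deriv (deriv (fun w => u (g w) / f₁ (g w))) z = 0))) := by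
  intro xt
  have hf₁J : ∀ t ∈ J, _ := fun t ht => hf₁diff t (hJI ht)
  have hf₂J : ∀ t ∈ J, _ := fun t ht => hf₂diff t (hJI ht)
  have hW : ∀ t ∈ I, 0 < wronskian f₁ f₂ t := fun t ht => by
    rw [wronskian_eq_mul_exp_neg_integral hIopen hIconn hr hf₁diff hf₂diff hf₁ode hf₂ode hI0 ht]
    simp [wronskian, hf₁0, hf₁'0, hf₂0, hf₂'0, Real.exp_pos]
  have hxt : ∀ t ∈ J, deriv xt t = wronskian f₁ f₂ t / f₁ t ^ 2 := fun t ht =>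
    ((hf₂J t ht).1.hasDerivAt.div (hf₁J t ht).1.hasDerivAt (hf₁ne t ht)).deriv
  have hxt_pos : ∀ t ∈ J, 0 < deriv xt t := fun t ht =>
    hxt t ht ▸ div_pos (hW t (hJI ht)) (sq_pos_of_ne_zero (hf₁ne t ht))
  have hxt_ne : ∀ t ∈ J, deriv xt t ≠ 0 := fun t ht => (hxt_pos t ht).ne'
  have hC1 : ContDiffOn ℝ 1 xt J := contDiffOn_div_of_differentiableAt_deriv hJopen hf₁J hf₂J hf₁ne
  have hinj : InjOn xt J := (strictMonoOn_of_deriv_pos hJconn.ordConnected.convex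
    hC1.continuousOn fun t ht => hxt_pos t (hJopen.interior_eq ▸ ht)).injOn
  have hleft : ∀ t ∈ J, invFunOn xt J (xt t) = t := fun t ht => hinj.leftInvOn_invFunOn ht
  refine ⟨fun t ht => (hW t ht).ne', fun t ht => ⟨hxt t ht, hxt_ne t ht⟩, hC1, hinj,
    isOpen_image_of_contDiffOn hJopen hC1 hxt_ne, hJconn.image xt hC1.continuousOn,
    ⟨invFunOn xt J, hleft, contDiffOn_of_leftInvOn hJopen hC1 hxt_ne hleft⟩,
    fun a b t ht => by simp only [xt]; field_simp [hf₁ne t ht], fun u hu => ?_⟩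
  have hsecond := fun (g : ℝ → ℝ) (hg : ∀ t ∈ J, g (xt t) = t) t (ht : t ∈ J) =>
    deriv_deriv_div_comp_leftInvOn hJopen hf₁J hf₂J hu (fun t ht => hf₁ode t (hJI ht))
      (fun t ht => hf₂ode t (hJI ht)) hf₁ne (fun t ht => (hW t (hJI ht)).ne') hg ht
  constructor
  · rintro hode g hg _ ⟨t, ht, rfl⟩
    exact (hsecond g hg t ht).trans (by rw [show residual r s u t = 0 from hode t ht]; simp)
  · intro h t ht
    show residual r s u t = 0
    simpa [hf₁ne t ht, (hW t (hJI ht)).ne'] using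
      (hsecond _ hleft t ht).symm.trans (h _ hleft _ (mem_image_of_mem xt ht))
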